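/- Let S be a numerical semigroup with the Arf property and multiplicity m > 2. Then for every integer k with 0 < k < m/2, one has w(2k) ≤ w(k) + k and w(m − 2k) ≤ w(m − k) + (m − k). -/

import Mathlib

/-- A numerical semigroup: a subset of ℕ containing 0, closed under addition,
with finite complement. -/
def IsNumericalSemigroup (S : Set ℕ) : Prop :=
  0 ∈ S ∧ (∀ a ∈ S, ∀ b ∈ S, a + b ∈ S) ∧ Sᶜ.Finite

/-- The Arf property: for all x ≥ y ≥ z in S, x + y - z ∈ S. -/
def HasArfProperty (S : Set ℕ) : Prop :=
  ∀ x ∈ S, ∀ y ∈ S, ∀ z ∈ S, z ≤ y → y ≤ x → x + y - z ∈ S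

/-- The conductor: the least c such that every n ≥ c lies in S. -/
noncomputable def conductorOf (S : Set ℕ) : ℕ := sInf {c | ∀ n, c ≤ n → n ∈ S}

/-- The Frobenius number: the largest natural number not in S. -/
noncomputable def frobeniusOf (S : Set ℕ) : ℕ := sSup {n | n ∉ S}

/-- The genus: the number of gaps of S. -/
noncomputable def genusOf (S : Set ℕ) : ℕ := Sᶜ.ncard

/-- The multiplicity: the least positive element of S. -/
noncomputable def multiplicityOf (S : Set ℕ) : ℕ := sInf {n | n ∈ S ∧ 0 < n}

/-- w(i) = min { s ∈ S : s ≡ i (mod m) }. -/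
noncomputable def aperyW (S : Set ℕ) (m i : ℕ) : ℕ := sInf {s | s ∈ S ∧ s % m = i}

/-- The cocycle h(i,j) = (w(i) + w(j) - w((i+j) mod m)) / m, as a rational number. -/
noncomputable def cocycle (S : Set ℕ) (m i j : ℕ) : ℚ :=
  ((aperyW S m i : ℚ) + (aperyW S m j : ℚ) - (aperyW S m ((i + j) % m) : ℚ)) / (m : ℚ)

/-- An Arf sequence (x₁, …, xₙ), 0-indexed: xₙ ≥ ⋯ ≥ x₁ ≥ 2, and each
x_{i+1} is either a sum x_i + ⋯ + x_j for some j ≤ i, or at least x_i + ⋯ + x₁. -/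
def ArfSeq (n : ℕ) (x : Fin n → ℕ) : Prop :=
  1 ≤ n ∧ Monotone x ∧ (∀ i, 2 ≤ x i) ∧
  ∀ i : Fin n, ∀ h : i.1 + 1 < n,
    (∃ j : Fin n, j ≤ i ∧ x ⟨i.1 + 1, h⟩ = ∑ k ∈ Finset.Icc j i, x k) ∨
    (∑ k ∈ Finset.Iic i, x k) ≤ x ⟨i.1 + 1, h⟩

/-- The set S(x₁,…,xₙ) = {0} ∪ {xₙ + ⋯ + x_k : 1 ≤ k ≤ n} ∪ {z : z ≥ x₁ + ⋯ + xₙ}. -/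
def arfSet (n : ℕ) (x : Fin n → ℕ) : Set ℕ :=
  {z | z = 0 ∨ (∃ k : Fin n, z = ∑ i ∈ Finset.Ici k, x i) ∨ (∑ i, x i) ≤ z}

/-- The numerical-semigroup-like set generated by A ⊆ ℕ. -/
def genNS (A : Set ℕ) : Set ℕ := (AddSubmonoid.closure A : Set ℕ)

/-!
In an Arf semigroup, `2s - z ∈ S` for `z ≤ s` in `S`. Taking `z` the largest multiple of the
multiplicity `m` below `s = w(r)` gives `w(r) + r ∈ S`, an element of residue `2r mod m`.
Applied to `r = k` and `r = m - k` this yields both inequalities.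
-/

namespace IsNumericalSemigroup

variable {S : Set ℕ}

theorem exists_forall_ge_mem (hS : IsNumericalSemigroup S) : ∃ B, ∀ n, B ≤ n → n ∈ S := by
  obtain ⟨B, hB⟩ := hS.2.2.bddAbove
  refine ⟨B + 1, fun n hn => ?_⟩
  by_contra hnS
  exact absurd (hB hnS) (by omega)

theorem multiplicityOf_mem (hS : IsNumericalSemigroup S) : multiplicityOf S ∈ S := by
  obtain ⟨B, hB⟩ := hS.exists_forall_ge_mem
  exact (Nat.sInf_mem (s := {n | n ∈ S ∧ 0 < n}) ⟨B + 1, hB _ (by omega), by omega⟩).1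

theorem mul_mem (hS : IsNumericalSemigroup S) {m : ℕ} (hm : m ∈ S) (t : ℕ) : m * t ∈ S := by
  induction t with
  | zero => simpa using hS.1
  | succ t ih => simpa [Nat.mul_succ] using hS.2.1 _ ih _ hm

theorem exists_mem_mod_eq (hS : IsNumericalSemigroup S) {m i : ℕ} (hi : i < m) :
    ∃ s ∈ S, s % m = i := by
  obtain ⟨B, hB⟩ := hS.exists_forall_ge_mem
  refine ⟨m * B + i, hB _ ?_, by rw [Nat.mul_add_mod, Nat.mod_eq_of_lt hi]⟩
  have := Nat.le_mul_of_pos_left B (show 0 < m by omega)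
  omega

theorem aperyW_mem (hS : IsNumericalSemigroup S) {m i : ℕ} (hi : i < m) :
    aperyW S m i ∈ S ∧ aperyW S m i % m = i :=
  Nat.sInf_mem (hS.exists_mem_mod_eq hi)

end IsNumericalSemigroup

theorem aperyW_le {S : Set ℕ} {m s : ℕ} (hs : s ∈ S) : aperyW S m (s % m) ≤ s :=
  Nat.sInf_le ⟨hs, rfl⟩

theorem HasArfProperty.add_mod_mem {S : Set ℕ} (hS : IsNumericalSemigroup S)
    (hA : HasArfProperty S) {m s : ℕ} (hm : m ∈ S) (hs : s ∈ S) : s + s % m ∈ S := by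
  have hdiv := Nat.div_add_mod s m
  have h := hA s hs s hs (m * (s / m)) (hS.mul_mem hm _) (by omega) le_rfl
  rwa [show s + s - m * (s / m) = s + s % m by omega] at h

theorem HasArfProperty.aperyW_two_mul_mod_le {S : Set ℕ} (hS : IsNumericalSemigroup S)
    (hA : HasArfProperty S) {m r : ℕ} (hm : m ∈ S) (hr : r < m) :
    aperyW S m (2 * r % m) ≤ aperyW S m r + r := by
  obtain ⟨hwS, hwr⟩ := hS.aperyW_mem hr
  have hmem := hA.add_mod_mem hS hm hwS
  rw [hwr] at hmem
  have hmod : (aperyW S m r + r) % m = 2 * r % m := by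
    rw [Nat.add_mod, hwr, Nat.mod_eq_of_lt hr, two_mul]
  simpa only [hmod] using aperyW_le (m := m) hmem

theorem arf_aperyW_double_general (S : Set ℕ) (hS : IsNumericalSemigroup S)
    (hA : HasArfProperty S) (m : ℕ) (hm : m = multiplicityOf S) :
    ∀ k : ℕ, 0 < k → 2 * k < m →
      aperyW S m (2 * k) ≤ aperyW S m k + k ∧
      aperyW S m (m - 2 * k) ≤ aperyW S m (m - k) + (m - k) := by
  intro k hk hkm
  have hmS : m ∈ S := hm ▸ hS.multiplicityOf_mem
  constructor
  · simpa only [Nat.mod_eq_of_lt hkm] using hA.aperyW_two_mul_mod_le hS hmS (r := k) (by omega)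
  · have hmod : 2 * (m - k) % m = m - 2 * k := by
      rw [show 2 * (m - k) = m - 2 * k + m by omega, Nat.add_mod_right,
        Nat.mod_eq_of_lt (by omega)]
    simpa only [hmod] using hA.aperyW_two_mul_mod_le hS hmS (r := m - k) (by omega)

theorem arf_aperyW_double (S : Set ℕ) (hS : IsNumericalSemigroup S)
    (hA : HasArfProperty S) (m : ℕ) (hm : m = multiplicityOf S) (hm2 : 2 < m) :
    ∀ k : ℕ, 0 < k → 2 * k < m →
      aperyW S m (2 * k) ≤ aperyW S m k + k ∧
      aperyW S m (m - 2 * k) ≤ aperyW S m (m - k) + (m - k) :=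
  arf_aperyW_double_general S hS hA m hm
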